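/- Let Ψ : ℝ → ℝ and define μ_k = E_{x∼{±1}^d}[(∏_{i=1}^k x_i)·Ψ(d^{-1}Σ_{i=1}^d x_i)] for 0 ≤ k ≤ d. Then μ_k can be written as μ_k = 2^{-d} Σ_{x∈{±1}^d} (∏_{i≤k} x_i) Ψ(d^{-1}Σ_i x_i), and if Ψ has an everywhere-convergent power series expansion Ψ(t) = Σ_{n≥0} a_n t^n with all a_n ≥ 0, then the even-indexed eigenvalues are non-increasing: μ_0 ≥ μ_2 ≥ μ_4 ≥ …, and the odd-indexed eigenvalues are non-increasing: μ_1 ≥ μ_3 ≥ μ_5 ≥ …. -/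

import Mathlib

/-!
Expanding `Ψ` in its power series, `μ_k - μ_{k+2}` becomes a nonnegative combination of the sums
`∑ₓ χ_U(x) (1 - x_j x_j') S(x)ⁿ` with `S = ∑ᵢ xᵢ` and `j, j' ∉ U`. Where `x_j ≠ x_j'` these two
coordinates cancel in `S`, and elsewhere `1 - x_j x_j'` vanishes, so `S` may be replaced by the sum
`S'` over the remaining coordinates; the term containing `x_j` then averages to zero under flipping
`x_j`, leaving `∑ₓ χ_U(x) S'(x)ⁿ`. This is nonnegative because multiplying by a coordinate only
permutes the characters, `χ_U · xᵢ = χ_{U ∆ {i}}`, so by induction on `n` every Fourier coefficient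
of `S'ⁿ` is nonnegative.
-/

open Finset
open scoped Classical

noncomputable def val {d : ℕ} (x : Fin d → Bool) (i : Fin d) : ℝ :=
  if x i then 1 else -1

noncomputable def chi {d : ℕ} (U : Finset (Fin d)) (x : Fin d → Bool) : ℝ :=
  ∏ i ∈ U, val x i

noncomputable def fhat {d : ℕ} (f : (Fin d → Bool) → ℝ) (U : Finset (Fin d)) : ℝ :=
  (∑ x : Fin d → Bool, f x * chi U x) / 2 ^ d

def flip' {d : ℕ} (x : Fin d → Bool) (i : Fin d) : Fin d → Bool :=
  Function.update x i (!x i)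

noncomputable def avgSens {d : ℕ} (f : (Fin d → Bool) → ℝ) : ℝ :=
  (∑ x : Fin d → Bool, ∑ i : Fin d,
    if f x ≠ f (flip' x i) then (1 : ℝ) else 0) / 2 ^ d


/-- `μ_k = E_{x∼{±1}^d}[(∏_{i<k} x_i)·Ψ(d⁻¹Σ_i x_i)]`. -/
noncomputable def mu (d : ℕ) (Ψ : ℝ → ℝ) (k : ℕ) : ℝ :=
  (∑ x : Fin d → Bool,
    (∏ i ∈ Finset.univ.filter (fun i : Fin d => (i : ℕ) < k), val x i)
      * Ψ ((d : ℝ)⁻¹ * ∑ i : Fin d, val x i)) / 2 ^ d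

lemma val_mul_self {d : ℕ} (x : Fin d → Bool) (i : Fin d) : val x i * val x i = 1 := by
  unfold _root_.val; split <;> norm_num

lemma val_flip'_self {d : ℕ} (x : Fin d → Bool) (i : Fin d) : val (flip' x i) i = -val x i := by
  unfold _root_.val flip'; cases x i <;> simp

lemma val_flip'_of_ne {d : ℕ} (x : Fin d → Bool) {i j : Fin d} (h : j ≠ i) :
    val (flip' x i) j = val x j := by
  simp only [_root_.val, flip', Function.update_of_ne h]

lemma flip'_involutive {d : ℕ} (i : Fin d) : Function.Involutive (flip' · i) := by
  intro x
  simp [flip', Function.update_idem]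

lemma chi_flip'_of_notMem {d : ℕ} {U : Finset (Fin d)} {i : Fin d} (hi : i ∉ U)
    (x : Fin d → Bool) : chi U (flip' x i) = chi U x :=
  prod_congr rfl fun _ hj => val_flip'_of_ne x (ne_of_mem_of_not_mem hj hi)

lemma sum_val_flip'_of_notMem {d : ℕ} {T : Finset (Fin d)} {i : Fin d} (hi : i ∉ T)
    (x : Fin d → Bool) : ∑ j ∈ T, val (flip' x i) j = ∑ j ∈ T, val x j :=
  sum_congr rfl fun _ hj => val_flip'_of_ne x (ne_of_mem_of_not_mem hj hi)

lemma chi_mul_chi {d : ℕ} (U V : Finset (Fin d)) (x : Fin d → Bool) :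
    chi U x * chi V x = chi (symmDiff U V) x := by
  have split : ∀ A B : Finset (Fin d), chi A x = chi (A \ B) x * chi (A ∩ B) x := fun A B => by
    rw [chi, chi, chi, ← prod_union (disjoint_sdiff_inter A B), sdiff_union_inter]
  have sq : chi (U ∩ V) x * chi (U ∩ V) x = 1 := by
    rw [chi, ← prod_mul_distrib]; exact prod_eq_one fun i _ => val_mul_self x i
  have union : chi (U \ V ∪ V \ U) x = chi (U \ V) x * chi (V \ U) x :=
    prod_union disjoint_sdiff_sdiff
  rw [split U V, split V U, inter_comm V U, Finset.symmDiff_def, union]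
  linear_combination chi (U \ V) x * chi (V \ U) x * sq

-- Flipping coordinate `i` negates the summand.
lemma sum_val_mul_eq_zero {d : ℕ} (i : Fin d) (g : (Fin d → Bool) → ℝ)
    (hg : ∀ x, g (flip' x i) = g x) : ∑ x, val x i * g x = 0 := by
  have h := Fintype.sum_bijective _ (flip'_involutive i).bijective
    (fun x => val (flip' x i) i * g (flip' x i)) (fun x => val x i * g x) fun _ => rfl
  simp only [val_flip'_self, hg, neg_mul, sum_neg_distrib] at h
  linarith

lemma sum_chi_nonneg {d : ℕ} (U : Finset (Fin d)) : 0 ≤ ∑ x, chi U x := by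
  obtain rfl | ⟨i, hi⟩ := U.eq_empty_or_nonempty
  · simp [chi]
  · have h : ∀ x, chi U x = val x i * chi (U.erase i) x := fun x => (mul_prod_erase U _ hi).symm
    simp only [h, sum_val_mul_eq_zero i _ (chi_flip'_of_notMem (notMem_erase i U)), le_refl]

lemma sum_chi_mul_pow_sum_nonneg {d : ℕ} (U T : Finset (Fin d)) (n : ℕ) :
    0 ≤ ∑ x, chi U x * (∑ i ∈ T, val x i) ^ n := by
  induction n generalizing U with
  | zero => simpa using sum_chi_nonneg U
  | succ n ih =>
    have h : ∀ x, chi U x * (∑ i ∈ T, val x i) ^ (n + 1)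
        = ∑ i ∈ T, chi (symmDiff U {i}) x * (∑ i ∈ T, val x i) ^ n := fun x => by
      rw [pow_succ, mul_sum, mul_sum]
      refine sum_congr rfl fun i _ => ?_
      have hi : chi {i} x = val x i := prod_singleton _ _
      rw [← chi_mul_chi, hi]
      ring
    rw [sum_congr rfl fun x _ => h x, sum_comm]
    exact sum_nonneg fun i _ => ih _

lemma mul_add_pow_eq_mul_pow_of_mul_eq_zero {R : Type*} [CommRing R] {p w : R}
    (h : p * w = 0) (s : R) (n : ℕ) : p * (w + s) ^ n = p * s ^ n := by
  induction n with
  | zero => simp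
  | succ n ih => linear_combination (w + s) * ih + s ^ n * h

lemma sum_chi_insert_insert_mul_pow_le {d : ℕ} {U : Finset (Fin d)} {j₁ j₂ : Fin d}
    (h₁₂ : j₁ ≠ j₂) (h₁ : j₁ ∉ U) (h₂ : j₂ ∉ U) (n : ℕ) :
    ∑ x, chi (insert j₁ (insert j₂ U)) x * (∑ i, val x i) ^ n
      ≤ ∑ x, chi U x * (∑ i, val x i) ^ n := by
  set T := (univ.erase j₁).erase j₂
  have hT : j₁ ∉ T := fun h => notMem_erase j₁ _ (mem_of_mem_erase h)
  have hS : ∀ x, ∑ i, val x i = val x j₁ + val x j₂ + ∑ i ∈ T, val x i := fun x => by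
    rw [← add_sum_erase _ _ (mem_univ j₁),
      ← add_sum_erase _ _ (mem_erase.2 ⟨h₁₂.symm, mem_univ j₂⟩), add_assoc]
  have hpoint : ∀ x, chi U x * (∑ i, val x i) ^ n
        - chi (insert j₁ (insert j₂ U)) x * (∑ i, val x i) ^ n
      = chi U x * (∑ i ∈ T, val x i) ^ n
        - val x j₁ * (val x j₂ * chi U x * (∑ i ∈ T, val x i) ^ n) := fun x => by
    have hcancel : (1 - val x j₁ * val x j₂) * (val x j₁ + val x j₂) = 0 := by
      linear_combination (-val x j₂) * val_mul_self x j₁ - val x j₁ * val_mul_self x j₂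
    have := mul_add_pow_eq_mul_pow_of_mul_eq_zero hcancel (∑ i ∈ T, val x i) n
    have hchi : chi (insert j₁ (insert j₂ U)) x = val x j₁ * (val x j₂ * chi U x) := by
      simp only [chi, prod_insert (by simp [h₁, h₁₂] : j₁ ∉ insert j₂ U), prod_insert h₂]
    rw [hchi, hS]
    linear_combination chi U x * this
  have hodd : ∑ x, val x j₁ * (val x j₂ * chi U x * (∑ i ∈ T, val x i) ^ n) = 0 :=
    sum_val_mul_eq_zero j₁ _ fun x => by
      rw [val_flip'_of_ne x h₁₂.symm, chi_flip'_of_notMem h₁, sum_val_flip'_of_notMem hT]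
  have := sum_chi_mul_pow_sum_nonneg U T n
  rw [← sub_nonneg, ← sum_sub_distrib, sum_congr rfl fun x _ => hpoint x, sum_sub_distrib, hodd]
  linarith

lemma hasSum_sum_chi_mul_comp {d : ℕ} {Ψ : ℝ → ℝ} {a : ℕ → ℝ}
    (hΨ : ∀ t, HasSum (fun n => a n * t ^ n) (Ψ t)) (c : ℝ) (U : Finset (Fin d)) :
    HasSum (fun n => a n * c ^ n * ∑ x, chi U x * (∑ i, val x i) ^ n)
      (∑ x, chi U x * Ψ (c * ∑ i, val x i)) := by
  have hterm : (fun n => a n * c ^ n * ∑ x, chi U x * (∑ i, val x i) ^ n)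
      = fun n => ∑ x, chi U x * (a n * (c * ∑ i, val x i) ^ n) := funext fun n => by
    rw [mul_sum]
    exact sum_congr rfl fun x _ => by ring
  rw [hterm]
  exact hasSum_sum fun x _ => (hΨ (c * ∑ i, val x i)).mul_left (chi U x)

lemma sum_chi_insert_insert_mul_comp_le {d : ℕ} {Ψ : ℝ → ℝ} {a : ℕ → ℝ} (ha : ∀ n, 0 ≤ a n)
    (hΨ : ∀ t, HasSum (fun n => a n * t ^ n) (Ψ t)) {c : ℝ} (hc : 0 ≤ c)
    {U : Finset (Fin d)} {j₁ j₂ : Fin d} (h₁₂ : j₁ ≠ j₂) (h₁ : j₁ ∉ U) (h₂ : j₂ ∉ U) :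
    ∑ x, chi (insert j₁ (insert j₂ U)) x * Ψ (c * ∑ i, val x i)
      ≤ ∑ x, chi U x * Ψ (c * ∑ i, val x i) :=
  hasSum_le (fun n => mul_le_mul_of_nonneg_left (sum_chi_insert_insert_mul_pow_le h₁₂ h₁ h₂ n)
      (mul_nonneg (ha n) (pow_nonneg hc n)))
    (hasSum_sum_chi_mul_comp hΨ c _) (hasSum_sum_chi_mul_comp hΨ c U)

lemma mu_add_two_le {d : ℕ} {Ψ : ℝ → ℝ} {a : ℕ → ℝ} (ha : ∀ n, 0 ≤ a n)
    (hΨ : ∀ t, HasSum (fun n => a n * t ^ n) (Ψ t)) {m : ℕ} (hm : m + 2 ≤ d) :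
    mu d Ψ (m + 2) ≤ mu d Ψ m := by
  set U := univ.filter fun i : Fin d => (i : ℕ) < m
  have hU : univ.filter (fun i : Fin d => (i : ℕ) < m + 2)
      = insert ⟨m, by omega⟩ (insert ⟨m + 1, by omega⟩ U) := by
    ext i
    simp only [U, mem_filter, mem_univ, true_and, mem_insert, Fin.ext_iff]
    omega
  have hle := sum_chi_insert_insert_mul_comp_le ha hΨ (inv_nonneg.2 (Nat.cast_nonneg d))
    (U := U) (j₁ := ⟨m, by omega⟩) (j₂ := ⟨m + 1, by omega⟩) (by simp [Fin.ext_iff])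
    (by simp [U]) (by simp [U])
  unfold mu
  rw [hU]
  exact div_le_div_of_nonneg_right hle (by positivity)

theorem weak_spectral_simplicity_bias_general (d : ℕ)
    (Ψ : ℝ → ℝ) (a : ℕ → ℝ) (ha : ∀ n, 0 ≤ a n)
    (hΨ : ∀ t : ℝ, HasSum (fun n : ℕ => a n * t ^ n) (Ψ t)) :
    (∀ k : ℕ, mu d Ψ k
        = 2 ^ (-(d : ℤ)) * ∑ x : Fin d → Bool,
            (∏ i ∈ Finset.univ.filter (fun i : Fin d => (i : ℕ) < k), val x i)
              * Ψ ((d : ℝ)⁻¹ * ∑ i : Fin d, val x i)) ∧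
    (∀ k : ℕ, 2 * k + 2 ≤ d → mu d Ψ (2 * k + 2) ≤ mu d Ψ (2 * k)) ∧
    (∀ k : ℕ, 2 * k + 3 ≤ d → mu d Ψ (2 * k + 3) ≤ mu d Ψ (2 * k + 1)) := by
  refine ⟨fun k => ?_, fun k hk => mu_add_two_le ha hΨ hk,
    fun k hk => mu_add_two_le (m := 2 * k + 1) ha hΨ hk⟩
  rw [mu, div_eq_mul_inv, zpow_neg, zpow_natCast, mul_comm]

/-- Weak spectral simplicity bias: `μ_k` is the average
`2^{-d} Σ_x (∏_{i<k} x_i) Ψ(d⁻¹Σ_i x_i)`, and if `Ψ` has an everywhere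
convergent power series with nonnegative coefficients, the eigenvalues are
non-increasing separately along even and odd degrees. -/
theorem weak_spectral_simplicity_bias (d : ℕ) (hd : 0 < d)
    (Ψ : ℝ → ℝ) (a : ℕ → ℝ) (ha : ∀ n, 0 ≤ a n)
    (hΨ : ∀ t : ℝ, HasSum (fun n : ℕ => a n * t ^ n) (Ψ t)) :
    (∀ k : ℕ, mu d Ψ k
        = 2 ^ (-(d : ℤ)) * ∑ x : Fin d → Bool,
            (∏ i ∈ Finset.univ.filter (fun i : Fin d => (i : ℕ) < k), val x i)
              * Ψ ((d : ℝ)⁻¹ * ∑ i : Fin d, val x i)) ∧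
    (∀ k : ℕ, 2 * k + 2 ≤ d → mu d Ψ (2 * k + 2) ≤ mu d Ψ (2 * k)) ∧
    (∀ k : ℕ, 2 * k + 3 ≤ d → mu d Ψ (2 * k + 3) ≤ mu d Ψ (2 * k + 1)) :=
  weak_spectral_simplicity_bias_general d Ψ a ha hΨ
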